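/- arXiv:1407.1243 — 5 statements merged into one kernel-verified Lean document; each statement's English description precedes it below -/
import Mathlib

section
/- Let F be an algebra of partial functions, let θ be a representation of F by partial functions, and let f ∈ F. Then for every g ∈ F with g ⊆ f we have θ(A(g)∘f) = θ(f) \ θ(g); consequently θ restricts to an isomorphism from the Boolean algebra ↓f = {g ∈ F : g ⊆ f} (with meet intersection and complement g ↦ A(g)∘f) onto a field of sets of subsets of θ(f). -/
/-! Algebras of partial functions: basic definitions. -/

namespace PFAlg

variable {X Y : Type*}

/-- `f ⊆ X × X` is a partial function. -/
def IsPF (f : Set (X × X)) : Prop :=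
  ∀ ⦃x y z : X⦄, (x, y) ∈ f → (x, z) ∈ f → y = z

/-- Composition of partial functions (binary relations), written left-to-right:
`f ∘ g = {(x,z) : ∃ y, (x,y) ∈ f and (y,z) ∈ g}`. -/
def comp (f g : Set (X × X)) : Set (X × X) :=
  {p | ∃ y, (p.1, y) ∈ f ∧ (y, p.2) ∈ g}

/-- Antidomain: the diagonal of the set of points where `f` is undefined. -/
def adom (f : Set (X × X)) : Set (X × X) :=
  {p | p.1 = p.2 ∧ ∀ y, (p.1, y) ∉ f}

/-- An algebra of partial functions on the base `X`: a nonempty collection of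
partial functions closed under composition, intersection and antidomain. -/
structure IsPFAlgebra (F : Set (Set (X × X))) : Prop where
  nonempty : F.Nonempty
  pf : ∀ f ∈ F, IsPF f
  comp_mem : ∀ f ∈ F, ∀ g ∈ F, comp f g ∈ F
  inter_mem : ∀ f ∈ F, ∀ g ∈ F, f ∩ g ∈ F
  adom_mem : ∀ f ∈ F, adom f ∈ F

/-- `m` is the supremum of `S` in the poset `(F, ⊆)`. -/
def IsLUBIn (F S : Set (Set (X × X))) (m : Set (X × X)) : Prop :=
  m ∈ F ∧ (∀ s ∈ S, s ⊆ m) ∧ ∀ c ∈ F, (∀ s ∈ S, s ⊆ c) → m ⊆ c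

/-- `m` is the infimum of `S` in the poset `(F, ⊆)`. -/
def IsGLBIn (F S : Set (Set (X × X))) (m : Set (X × X)) : Prop :=
  m ∈ F ∧ (∀ s ∈ S, m ⊆ s) ∧ ∀ c ∈ F, (∀ s ∈ S, c ⊆ s) → c ⊆ m

/-- `b` is an atom of `F`: a minimal element of `F \ {∅}`. -/
def IsAtomOf (F : Set (Set (X × X))) (b : Set (X × X)) : Prop :=
  b ∈ F ∧ b ≠ ∅ ∧ ∀ g ∈ F, g ≠ ∅ → g ⊆ b → g = b

/-- `F` is atomic: every nonempty member contains an atom. -/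
def Atomic (F : Set (Set (X × X))) : Prop :=
  ∀ f ∈ F, f ≠ ∅ → ∃ b, IsAtomOf F b ∧ b ⊆ f

/-- A representation of `F` by partial functions over the base `Y`. -/
structure IsRep (F : Set (Set (X × X))) (θ : Set (X × X) → Set (Y × Y)) : Prop where
  injOn : Set.InjOn θ F
  pf : ∀ f ∈ F, IsPF (θ f)
  comp_eq : ∀ f ∈ F, ∀ g ∈ F, θ (comp f g) = comp (θ f) (θ g)
  inter_eq : ∀ f ∈ F, ∀ g ∈ F, θ (f ∩ g) = θ f ∩ θ g
  adom_eq : ∀ f ∈ F, θ (adom f) = adom (θ f)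

/-- `θ` is meet complete: it turns existing infima of nonempty subsets into intersections. -/
def MeetComplete (F : Set (Set (X × X))) (θ : Set (X × X) → Set (Y × Y)) : Prop :=
  ∀ S ⊆ F, S.Nonempty → ∀ m, IsGLBIn F S m → θ m = ⋂ s ∈ S, θ s

/-- `θ` is join complete: it turns existing suprema into unions. -/
def JoinComplete (F : Set (Set (X × X))) (θ : Set (X × X) → Set (Y × Y)) : Prop :=
  ∀ S ⊆ F, ∀ m, IsLUBIn F S m → θ m = ⋃ s ∈ S, θ s

/-- `θ` is an atomic representation. -/
def AtomicRep (F : Set (Set (X × X))) (θ : Set (X × X) → Set (Y × Y)) : Prop :=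
  ∀ f ∈ F, ∀ p ∈ θ f, ∃ b, IsAtomOf F b ∧ p ∈ θ b

/-- Composition in `F` is completely left-distributive over joins. -/
def CompLeftDistribJoins (F : Set (Set (X × X))) : Prop :=
  ∀ a ∈ F, ∀ S ⊆ F, ∀ m, IsLUBIn F S m → IsLUBIn F ((fun s => comp a s) '' S) (comp a m)

/-- Composition in `F` is completely left-distributive over meets. -/
def CompLeftDistribMeets (F : Set (Set (X × X))) : Prop :=
  ∀ a ∈ F, ∀ S ⊆ F, S.Nonempty → ∀ m, IsGLBIn F S m →
    IsGLBIn F ((fun s => comp a s) '' S) (comp a m)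

end PFAlg


namespace PFAlg

variable {X Y : Type*}

theorem comp_adom_subset (g f : Set (X × X)) : comp (adom g) f ⊆ f := by
  rintro ⟨x, z⟩ ⟨y, ⟨hxy, -⟩, hyz⟩
  obtain rfl : x = y := hxy
  exact hyz

/-- Since `f` is functional and `g ⊆ f`, a pair of `f` lies outside `g` exactly when `g` is
undefined at its first coordinate. -/
theorem comp_adom_eq_diff {f g : Set (X × X)} (hf : IsPF f) (hgf : g ⊆ f) :
    comp (adom g) f = f \ g := by
  ext ⟨x, z⟩
  constructor
  · rintro ⟨y, ⟨hxy, hng⟩, hyz⟩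
    obtain rfl : x = y := hxy
    exact ⟨hyz, hng z⟩
  · rintro ⟨hxz, hng⟩
    refine ⟨x, ⟨rfl, fun w hw => ?_⟩, hxz⟩
    obtain rfl := hf (hgf hw) hxz
    exact hng hw

namespace IsRep

variable {F : Set (Set (X × X))} {θ : Set (X × X) → Set (Y × Y)} {f g : Set (X × X)}

theorem mono (hθ : IsRep F θ) (hg : g ∈ F) (hf : f ∈ F) (hgf : g ⊆ f) : θ g ⊆ θ f := by
  rw [← Set.inter_eq_left.mpr hgf, hθ.inter_eq g hg f hf]
  exact Set.inter_subset_right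

theorem subset_iff (hθ : IsRep F θ) (hF : IsPFAlgebra F) (hg : g ∈ F) (hf : f ∈ F) :
    g ⊆ f ↔ θ g ⊆ θ f := by
  refine ⟨hθ.mono hg hf, fun h => ?_⟩
  have hθ_inter : θ (g ∩ f) = θ g := by
    rw [hθ.inter_eq g hg f hf, Set.inter_eq_left.mpr h]
  rw [← hθ.injOn (hF.inter_mem g hg f hf) hg hθ_inter]
  exact Set.inter_subset_right

theorem map_comp_adom (hθ : IsRep F θ) (hF : IsPFAlgebra F) (hg : g ∈ F) (hf : f ∈ F)
    (hgf : g ⊆ f) : θ (comp (adom g) f) = θ f \ θ g := by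
  rw [hθ.comp_eq _ (hF.adom_mem g hg) f hf, hθ.adom_eq g hg,
    comp_adom_eq_diff (hθ.pf f hf) (hθ.mono hg hf hgf)]

end IsRep

end PFAlg

open PFAlg in
/-- a representation `θ` satisfies `θ(A(g)∘f) = θ(f) \ θ(g)` for `g ⊆ f` in `F`,
and restricts to an isomorphism from the Boolean algebra `↓f` onto a field of sets of
subsets of `θ(f)`. -/
theorem stmt1 {X Y : Type*} (F : Set (Set (X × X))) (hF : IsPFAlgebra F)
    (θ : Set (X × X) → Set (Y × Y)) (hθ : IsRep F θ)
    (f : Set (X × X)) (hf : f ∈ F) :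
    (∀ g ∈ F, g ⊆ f → θ (comp (adom g) f) = θ f \ θ g) ∧
    -- θ maps ↓f into subsets of θ(f), and is an order isomorphism onto its image
    (∀ g ∈ F, g ⊆ f → θ g ⊆ θ f) ∧
    (∀ g ∈ F, g ⊆ f → ∀ g' ∈ F, g' ⊆ f → (g ⊆ g' ↔ θ g ⊆ θ g')) ∧
    -- the image of ↓f is a field of sets over θ(f)
    (∅ : Set (Y × Y)) ∈ {A | ∃ g ∈ F, g ⊆ f ∧ θ g = A} ∧
    θ f ∈ {A | ∃ g ∈ F, g ⊆ f ∧ θ g = A} ∧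
    (∀ A ∈ {A | ∃ g ∈ F, g ⊆ f ∧ θ g = A}, ∀ B ∈ {A | ∃ g ∈ F, g ⊆ f ∧ θ g = A},
      A ∩ B ∈ {A | ∃ g ∈ F, g ⊆ f ∧ θ g = A}) ∧
    (∀ A ∈ {A | ∃ g ∈ F, g ⊆ f ∧ θ g = A}, θ f \ A ∈ {A | ∃ g ∈ F, g ⊆ f ∧ θ g = A}) ∧
    (∀ A ∈ {A | ∃ g ∈ F, g ⊆ f ∧ θ g = A}, A ⊆ θ f) := by
  have hcompl_mem : ∀ g ∈ F, comp (adom g) f ∈ F := fun g hg =>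
    hF.comp_mem _ (hF.adom_mem g hg) f hf
  refine ⟨fun g hg hgf => hθ.map_comp_adom hF hg hf hgf,
    fun g hg hgf => hθ.mono hg hf hgf,
    fun g hg _ g' hg' _ => hθ.subset_iff hF hg hg',
    ⟨comp (adom f) f, hcompl_mem f hf, comp_adom_subset f f, ?_⟩,
    ⟨f, hf, subset_rfl, rfl⟩, ?_, ?_, ?_⟩
  · rw [hθ.map_comp_adom hF hf hf subset_rfl, Set.sdiff_self]
  · rintro _ ⟨g, hg, hgf, rfl⟩ _ ⟨g', hg', -, rfl⟩
    exact ⟨g ∩ g', hF.inter_mem g hg g' hg', Set.inter_subset_left.trans hgf,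
      hθ.inter_eq g hg g' hg'⟩
  · rintro _ ⟨g, hg, hgf, rfl⟩
    exact ⟨comp (adom g) f, hcompl_mem g hg, comp_adom_subset g f,
      hθ.map_comp_adom hF hg hf hgf⟩
  · rintro _ ⟨g, hg, hgf, rfl⟩
    exact hθ.mono hg hf hgf
end

section
/- Let F be an algebra of partial functions and let θ be a representation of F by partial functions. Then θ is atomic if and only if θ is complete (i.e., both meet complete and join complete). -/
/-!
An atom `b` of `F` lies below a join only if it lies below one of the joined elements: otherwise
the join `m` could be cut down to `adom b ∘ m`, which misses `b`. With this, an atomic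
representation sends meets and joins to intersections and unions, since every point of `θ f`
is witnessed by an atom. Conversely, given `p ∈ θ f`, the members `g` of `F` with `p ∈ θ g`
must have a nonempty lower bound `c`, or else their meet is `∅` and meet completeness puts `p`
into `θ ∅ = ∅`. Such a `c` is an atom with `p ∈ θ c`: were `p` outside `θ c`, it would lie in
`θ (adom c ∘ f)`, forcing `c ⊆ adom c ∘ f` and so `c = ∅`.
-/

namespace PFAlg

variable {X Y : Type*} {F : Set (Set (X × X))} {θ : Set (X × X) → Set (Y × Y)}

theorem inter_adom_self (f : Set (X × X)) : f ∩ adom f = ∅ :=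
  Set.eq_empty_of_forall_notMem fun p ⟨hf, _, hp⟩ => hp p.2 hf

theorem inter_comp_adom_self (c g : Set (X × X)) : c ∩ comp (adom c) g = ∅ :=
  Set.eq_empty_of_forall_notMem fun p ⟨hc, _, ⟨_, hdom⟩, _⟩ => hdom p.2 hc

theorem eq_empty_of_subset_comp_adom_self {c g : Set (X × X)} (h : c ⊆ comp (adom c) g) :
    c = ∅ := by
  simpa [Set.inter_eq_left.mpr h] using inter_comp_adom_self c g

theorem subset_comp_adom_of_inter_eq_empty {b s m : Set (X × X)} (hm : IsPF m) (hbm : b ⊆ m)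
    (hsm : s ⊆ m) (hbs : b ∩ s = ∅) : s ⊆ comp (adom b) m := by
  intro q hq
  refine ⟨q.1, ⟨rfl, fun w hw => ?_⟩, hsm hq⟩
  obtain rfl : w = q.2 := hm (hbm hw) (hsm hq)
  exact (Set.eq_empty_iff_forall_notMem.mp hbs) q ⟨hw, hq⟩

theorem IsPFAlgebra.empty_mem (hF : IsPFAlgebra F) : ∅ ∈ F := by
  obtain ⟨f, hf⟩ := hF.nonempty
  simpa [inter_adom_self] using hF.inter_mem f hf _ (hF.adom_mem f hf)

theorem IsRep.map_empty (hF : IsPFAlgebra F) (hθ : IsRep F θ) : θ ∅ = ∅ := by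
  obtain ⟨f, hf⟩ := hF.nonempty
  have h := hθ.inter_eq f hf _ (hF.adom_mem f hf)
  rwa [hθ.adom_eq f hf, inter_adom_self, inter_adom_self] at h

theorem IsRep.mono_s4 (hθ : IsRep F θ) {f g : Set (X × X)} (hf : f ∈ F) (hg : g ∈ F)
    (h : f ⊆ g) : θ f ⊆ θ g := by
  rw [← Set.inter_eq_left.mpr h, hθ.inter_eq f hf g hg]
  exact Set.inter_subset_right

theorem IsAtomOf.subset_or_inter_eq_empty (hF : IsPFAlgebra F) {b s : Set (X × X)}
    (hb : IsAtomOf F b) (hs : s ∈ F) : b ⊆ s ∨ b ∩ s = ∅ := by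
  by_cases hbs : b ∩ s = ∅
  · exact Or.inr hbs
  · left
    rw [← hb.2.2 _ (hF.inter_mem b hb.1 s hs) hbs Set.inter_subset_left]
    exact Set.inter_subset_right

theorem IsAtomOf.subset_of_mem_rep (hF : IsPFAlgebra F) (hθ : IsRep F θ) {b s : Set (X × X)}
    (hb : IsAtomOf F b) (hs : s ∈ F) {p : Y × Y} (hpb : p ∈ θ b) (hps : p ∈ θ s) : b ⊆ s := by
  refine (hb.subset_or_inter_eq_empty hF hs).resolve_right fun hbs => ?_
  have hp : p ∈ θ (b ∩ s) := by rw [hθ.inter_eq b hb.1 s hs]; exact ⟨hpb, hps⟩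
  rw [hbs, hθ.map_empty hF] at hp
  exact hp

theorem IsAtomOf.exists_subset_of_subset_isLUBIn (hF : IsPFAlgebra F) {b m : Set (X × X)}
    {S : Set (Set (X × X))} (hb : IsAtomOf F b) (hSF : S ⊆ F) (hm : IsLUBIn F S m)
    (hbm : b ⊆ m) : ∃ s ∈ S, b ⊆ s := by
  by_contra! hnot
  have hdisj : ∀ s ∈ S, b ∩ s = ∅ := fun s hs =>
    (hb.subset_or_inter_eq_empty hF (hSF hs)).resolve_left (hnot s hs)
  have hcut : m ⊆ comp (adom b) m :=
    hm.2.2 _ (hF.comp_mem _ (hF.adom_mem b hb.1) m hm.1) fun s hs =>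
      subset_comp_adom_of_inter_eq_empty (hF.pf m hm.1) hbm (hm.2.1 s hs) (hdisj s hs)
  exact hb.2.1 (eq_empty_of_subset_comp_adom_self (hbm.trans hcut))

theorem isGLBIn_empty (h0 : ∅ ∈ F) {S : Set (Set (X × X))}
    (h : ∀ c ∈ F, (∀ s ∈ S, c ⊆ s) → c = ∅) : IsGLBIn F S ∅ :=
  ⟨h0, fun s _ => Set.empty_subset s, fun c hc hlb => (h c hc hlb).subset⟩

theorem meetComplete_of_atomicRep (hF : IsPFAlgebra F) (hθ : IsRep F θ)
    (hA : AtomicRep F θ) : MeetComplete F θ := by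
  rintro S hSF ⟨s₀, hs₀⟩ m hm
  refine (Set.subset_iInter₂ fun s (hs : s ∈ S) => hθ.mono_s4 hm.1 (hSF hs) (hm.2.1 s hs)).antisymm ?_
  intro p hp
  have hpS : ∀ s ∈ S, p ∈ θ s := Set.mem_iInter₂.mp hp
  obtain ⟨b, hb, hpb⟩ := hA s₀ (hSF hs₀) p (hpS s₀ hs₀)
  have hbm : b ⊆ m := hm.2.2 b hb.1 fun s hs =>
    hb.subset_of_mem_rep hF hθ (hSF hs) hpb (hpS s hs)
  exact hθ.mono_s4 hb.1 hm.1 hbm hpb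

theorem joinComplete_of_atomicRep (hF : IsPFAlgebra F) (hθ : IsRep F θ)
    (hA : AtomicRep F θ) : JoinComplete F θ := by
  intro S hSF m hm
  refine Set.Subset.antisymm ?_
    (Set.iUnion₂_subset fun s hs => hθ.mono_s4 (hSF hs) hm.1 (hm.2.1 s hs))
  intro p hp
  obtain ⟨b, hb, hpb⟩ := hA m hm.1 p hp
  obtain ⟨s, hs, hbs⟩ :=
    hb.exists_subset_of_subset_isLUBIn hF hSF hm (hb.subset_of_mem_rep hF hθ hm.1 hpb hp)
  exact Set.mem_iUnion₂.mpr ⟨s, hs, hθ.mono_s4 hb.1 (hSF hs) hbs hpb⟩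

section LowerBound

variable (hF : IsPFAlgebra F) (hθ : IsRep F θ) {f c : Set (X × X)} {p : Y × Y}
  (hf : f ∈ F) (hp : p ∈ θ f) (hc : c ∈ F) (hc0 : c ≠ ∅)
  (hlb : ∀ g ∈ F, p ∈ θ g → c ⊆ g)
include hF hθ hf hp hc hc0 hlb

theorem mem_rep_of_forall_subset : p ∈ θ c := by
  have hcut : comp (adom c) f ∈ F := hF.comp_mem _ (hF.adom_mem c hc) f hf
  have hpcut : p ∉ θ (comp (adom c) f) := fun hpcut =>
    hc0 (eq_empty_of_subset_comp_adom_self (hlb _ hcut hpcut))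
  rw [hθ.comp_eq _ (hF.adom_mem c hc) f hf, hθ.adom_eq c hc] at hpcut
  obtain ⟨z, hz⟩ : ∃ z, (p.1, z) ∈ θ c := by
    by_contra! hno
    exact hpcut ⟨p.1, ⟨rfl, hno⟩, hp⟩
  obtain rfl : z = p.2 := hθ.pf f hf (hθ.mono_s4 hc hf (hlb f hf hp) hz) hp
  exact hz

theorem isAtomOf_of_forall_subset : IsAtomOf F c := by
  refine ⟨hc, hc0, fun g hg hg0 hgc => hgc.antisymm (hlb g hg ?_)⟩
  exact mem_rep_of_forall_subset hF hθ hf hp hg hg0 fun h hh hph => hgc.trans (hlb h hh hph)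

end LowerBound

theorem atomicRep_of_meetComplete (hF : IsPFAlgebra F) (hθ : IsRep F θ)
    (hM : MeetComplete F θ) : AtomicRep F θ := by
  intro f hf p hp
  set U : Set (Set (X × X)) := {g | g ∈ F ∧ p ∈ θ g}
  by_cases hex : ∃ c ∈ F, c ≠ ∅ ∧ ∀ g ∈ U, c ⊆ g
  · obtain ⟨c, hc, hc0, hlb⟩ := hex
    have hlb' : ∀ g ∈ F, p ∈ θ g → c ⊆ g := fun g hg hpg => hlb g ⟨hg, hpg⟩
    exact ⟨c, isAtomOf_of_forall_subset hF hθ hf hp hc hc0 hlb',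
      mem_rep_of_forall_subset hF hθ hf hp hc hc0 hlb'⟩
  · have hglb : IsGLBIn F U ∅ := isGLBIn_empty hF.empty_mem fun c hc hlb =>
      by_contra fun hc0 => hex ⟨c, hc, hc0, hlb⟩
    have hpEmpty : p ∈ θ ∅ := by
      rw [hM U (fun g hg => hg.1) ⟨f, hf, hp⟩ ∅ hglb]
      exact Set.mem_iInter₂.mpr fun g hg => hg.2
    rw [hθ.map_empty hF] at hpEmpty
    exact absurd hpEmpty (Set.notMem_empty p)

end PFAlg

open PFAlg in
/-- a representation by partial functions is atomic iff it is complete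
(i.e. both meet complete and join complete). -/
theorem stmt4 {X Y : Type*} (F : Set (Set (X × X))) (hF : IsPFAlgebra F)
    (θ : Set (X × X) → Set (Y × Y)) (hθ : IsRep F θ) :
    AtomicRep F θ ↔ (MeetComplete F θ ∧ JoinComplete F θ) :=
  ⟨fun hA => ⟨meetComplete_of_atomicRep hF hθ hA, joinComplete_of_atomicRep hF hθ hA⟩,
    fun hC => atomicRep_of_meetComplete hF hθ hC.1⟩
end

section
/- Let F be an algebra of partial functions, let a ∈ F, and let S ⊆ F be such that the supremum ⨆S exists in (F, ⊆). Then the supremum of {s∘a : s ∈ S} exists in (F, ⊆) and equals (⨆S)∘a. That is, composition in F is completely right-distributive over joins. -/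
/-!
Let `c ∈ F` bound every `s ∘ a` from above. Partial functions satisfy
`f \ c = A(f ∩ c) ∘ f`, so `F` is closed under relative complement and contains
`u = A((m ∘ a) \ c) ∘ m`, the restriction of `m` to the points where `m ∘ a` stays inside `c`.
Since `m` is functional, every `s ∈ S` lies below `u`; hence `m ⊆ u`, which says `m ∘ a ⊆ c`.
-/

namespace PFAlg

variable {X : Type*}

theorem mem_comp_adom {f g : Set (X × X)} {x z : X} :
    (x, z) ∈ comp (adom g) f ↔ (∀ y, (x, y) ∉ g) ∧ (x, z) ∈ f := by
  constructor
  · rintro ⟨w, ⟨hxw, hg⟩, hf⟩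
    obtain rfl : x = w := hxw
    exact ⟨hg, hf⟩
  · rintro ⟨hg, hf⟩
    exact ⟨x, ⟨rfl, hg⟩, hf⟩

theorem comp_mono_left {f g : Set (X × X)} (h : Set (X × X)) (hfg : f ⊆ g) :
    comp f h ⊆ comp g h :=
  fun _ ⟨y, hf, hh⟩ => ⟨y, hfg hf, hh⟩

theorem IsPF.comp_adom_inter_self {f : Set (X × X)} (hf : IsPF f) (c : Set (X × X)) :
    comp (adom (f ∩ c)) f = f \ c := by
  ext ⟨x, z⟩
  rw [mem_comp_adom]
  constructor
  · rintro ⟨hfc, hxz⟩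
    exact ⟨hxz, fun hc => hfc z ⟨hxz, hc⟩⟩
  · rintro ⟨hxz, hc⟩
    refine ⟨fun y ⟨hxy, hcy⟩ => hc ?_, hxz⟩
    rwa [hf hxz hxy]

theorem IsPFAlgebra.diff_mem {F : Set (Set (X × X))} (hF : IsPFAlgebra F) {f c : Set (X × X)}
    (hf : f ∈ F) (hc : c ∈ F) : f \ c ∈ F := by
  rw [← (hF.pf f hf).comp_adom_inter_self c]
  exact hF.comp_mem _ (hF.adom_mem _ (hF.inter_mem f hf c hc)) f hf

theorem IsPF.subset_comp_adom_diff {s m a c : Set (X × X)} (hm : IsPF m) (hsm : s ⊆ m)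
    (hsa : comp s a ⊆ c) : s ⊆ comp (adom (comp m a \ c)) m := by
  rintro ⟨x, y⟩ hxy
  refine mem_comp_adom.2 ⟨?_, hsm hxy⟩
  rintro z ⟨⟨w, hxw, hwz⟩, hxz⟩
  obtain rfl : y = w := hm (hsm hxy) hxw
  exact hxz (hsa ⟨y, hxy, hwz⟩)

theorem comp_subset_of_subset_comp_adom_diff {m a c : Set (X × X)}
    (hm : m ⊆ comp (adom (comp m a \ c)) m) : comp m a ⊆ c := by
  rintro ⟨x, z⟩ hxz
  have ⟨y, hxy, _⟩ := hxz
  by_contra hc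
  exact (mem_comp_adom.1 (hm hxy)).1 z ⟨hxz, hc⟩

end PFAlg

open PFAlg in
theorem stmt7_general {X : Type*} (F : Set (Set (X × X))) (hF : IsPFAlgebra F)
    (a : Set (X × X)) (ha : a ∈ F)
    (S : Set (Set (X × X)))
    (m : Set (X × X)) (hm : IsLUBIn F S m) :
    IsLUBIn F ((fun s => comp s a) '' S) (comp m a) := by
  obtain ⟨hmF, hSm, hm_least⟩ := hm
  have hmaF : comp m a ∈ F := hF.comp_mem m hmF a ha
  refine ⟨hmaF, ?_, fun c hcF hc => ?_⟩
  · rintro _ ⟨s, hs, rfl⟩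
    exact comp_mono_left a (hSm s hs)
  · have huF : comp (adom (comp m a \ c)) m ∈ F :=
      hF.comp_mem _ (hF.adom_mem _ (hF.diff_mem hmaF hcF)) m hmF
    refine comp_subset_of_subset_comp_adom_diff (hm_least _ huF fun s hs => ?_)
    exact (hF.pf m hmF).subset_comp_adom_diff (hSm s hs) (hc _ ⟨s, hs, rfl⟩)

open PFAlg in
/-- composition in an algebra of partial functions is completely
right-distributive over joins: if `⨆S` exists in `(F, ⊆)` then the supremum of
`{s∘a : s ∈ S}` exists and equals `(⨆S)∘a`. -/
theorem stmt7 {X : Type*} (F : Set (Set (X × X))) (hF : IsPFAlgebra F)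
    (a : Set (X × X)) (ha : a ∈ F)
    (S : Set (Set (X × X))) (hS : S ⊆ F)
    (m : Set (X × X)) (hm : IsLUBIn F S m) :
    IsLUBIn F ((fun s => comp s a) '' S) (comp m a) :=
  stmt7_general F hF a ha S m hm
end

section
/- Let F be an algebra of partial functions, let a ∈ F, and let S ⊆ F be a finite subset such that the supremum ⨆S exists in (F, ⊆). Then the supremum of {a∘s : s ∈ S} exists in (F, ⊆) and equals a∘(⨆S). That is, composition in F is left-distributive over finite joins. -/
/-!
A finite join that exists in an algebra of partial functions is already the union. Since
`A(f ∪ g) = A(f) ∘ A(g)`, the antidomain `A(⋃ S)` of a finite `S` lies in `F`, so the restriction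
`A(A(⋃ S)) ∘ m` of `m` to the domain of `⋃ S` is again an upper bound of `S`. Hence `m` is defined
only where some `s ∈ S` is, and being a partial function extending `s`, it agrees with `s` there.
Left composition distributes over unions of relations, which gives the theorem.
-/

namespace PFAlg

variable {X : Type*}

theorem comp_sUnion (a : Set (X × X)) (S : Set (Set (X × X))) :
    comp a (⋃₀ S) = ⋃₀ ((fun s => comp a s) '' S) := by
  ext p
  simp only [comp, Set.mem_sUnion, Set.sUnion_image, Set.mem_iUnion, Set.mem_ofPred_eq,
    exists_prop]
  constructor
  · rintro ⟨y, hay, s, hs, hys⟩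
    exact ⟨s, hs, y, hay, hys⟩
  · rintro ⟨s, hs, y, hay, hys⟩
    exact ⟨y, hay, s, hs, hys⟩

theorem adom_union (f g : Set (X × X)) : adom (f ∪ g) = comp (adom f) (adom g) := by
  ext ⟨x, y⟩
  simp only [adom, comp, Set.mem_union, not_or, Set.mem_ofPred_eq]
  constructor
  · rintro ⟨rfl, h⟩
    exact ⟨x, ⟨rfl, fun z => (h z).1⟩, rfl, fun z => (h z).2⟩
  · rintro ⟨z, ⟨rfl, hf⟩, rfl, hg⟩
    exact ⟨rfl, fun w => ⟨hf w, hg w⟩⟩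

theorem mem_comp_adom_adom {f g : Set (X × X)} {p : X × X} :
    p ∈ comp (adom (adom f)) g ↔ (∃ z, (p.1, z) ∈ f) ∧ p ∈ g := by
  simp only [comp, adom, Set.mem_ofPred_eq, not_and, not_forall, not_not]
  constructor
  · rintro ⟨y, ⟨rfl, hdom⟩, hg⟩
    exact ⟨hdom p.1 rfl, hg⟩
  · rintro ⟨hdom, hg⟩
    exact ⟨p.1, ⟨rfl, fun _ _ => hdom⟩, hg⟩

theorem isLUBIn_sUnion {F S : Set (Set (X × X))} (h : ⋃₀ S ∈ F) : IsLUBIn F S (⋃₀ S) :=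
  ⟨h, fun _ => Set.subset_sUnion_of_mem, fun _ _ => Set.sUnion_subset⟩

namespace IsPFAlgebra

variable {F : Set (Set (X × X))}

theorem empty_mem_s8 (hF : IsPFAlgebra F) : ∅ ∈ F := by
  obtain ⟨f, hf⟩ := hF.nonempty
  have h : f ∩ adom f = ∅ :=
    Set.eq_empty_of_forall_notMem fun _ ⟨hp, _, hundef⟩ => hundef _ hp
  exact h ▸ hF.inter_mem f hf _ (hF.adom_mem f hf)

theorem adom_sUnion_mem (hF : IsPFAlgebra F) {S : Set (Set (X × X))} (hS : S ⊆ F)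
    (hfin : S.Finite) : adom (⋃₀ S) ∈ F := by
  induction S, hfin using Set.Finite.induction_on with
  | empty => simpa using hF.adom_mem ∅ hF.empty_mem_s8
  | @insert s T _ _ ih =>
    rw [Set.sUnion_insert, adom_union]
    exact hF.comp_mem _ (hF.adom_mem s (hS (Set.mem_insert s T))) _
      (ih ((Set.subset_insert s T).trans hS))

theorem eq_sUnion_of_isLUBIn (hF : IsPFAlgebra F) {S : Set (Set (X × X))} (hS : S ⊆ F)
    (hfin : S.Finite) {m : Set (X × X)} (hm : IsLUBIn F S m) : m = ⋃₀ S := by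
  obtain ⟨hmF, hub, hleast⟩ := hm
  have hrestrict : m ⊆ comp (adom (adom (⋃₀ S))) m := by
    refine hleast _ (hF.comp_mem _ (hF.adom_mem _ (hF.adom_sUnion_mem hS hfin)) _ hmF) ?_
    intro s hs p hp
    exact mem_comp_adom_adom.2 ⟨⟨p.2, Set.mem_sUnion_of_mem hp hs⟩, hub s hs hp⟩
  refine (Set.sUnion_subset hub).antisymm' fun ⟨x, y⟩ hxy => ?_
  obtain ⟨⟨z, s, hs, hz⟩, -⟩ := mem_comp_adom_adom.1 (hrestrict hxy)
  have hzp : z = y := hF.pf m hmF (hub s hs hz) hxy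
  exact ⟨s, hs, hzp ▸ hz⟩

end IsPFAlgebra

end PFAlg

open PFAlg in
/-- composition in an algebra of partial functions is left-distributive over
finite joins: if `S` is finite and `⨆S` exists in `(F, ⊆)` then the supremum of
`{a∘s : s ∈ S}` exists and equals `a∘(⨆S)`. -/
theorem stmt8 {X : Type*} (F : Set (Set (X × X))) (hF : IsPFAlgebra F)
    (a : Set (X × X)) (ha : a ∈ F)
    (S : Set (Set (X × X))) (hS : S ⊆ F) (hfin : S.Finite)
    (m : Set (X × X)) (hm : IsLUBIn F S m) :
    IsLUBIn F ((fun s => comp a s) '' S) (comp a m) := by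
  have hmF : comp a m ∈ F := hF.comp_mem a ha m hm.1
  rw [hF.eq_sUnion_of_isLUBIn hS hfin hm, comp_sUnion] at hmF ⊢
  exact isLUBIn_sUnion hmF
end

section
/- Let F be an algebra of partial functions that is atomic. Then composition in F is completely left-distributive over joins if and only if for all a, b, c ∈ F: if c ⊇ a∘x for every atom x of F with x ⊆ b, then c ⊇ a∘b. -/
/-!
In an atomic algebra every `b` is the join of the atoms below it: if an upper bound `c` of those
atoms missed a point of `b`, the restriction `A(b ∩ c) ∘ b` of `b` to the points where it
disagrees with `c` would be nonempty, hence contain an atom, which lies below `b` but not below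
`c`. Conversely, an atom `x` below a join `m = ⨆ S` lies below some `s ∈ S`: otherwise, by
minimality, `x` is disjoint from every `s`, and since all of them are restrictions of the partial
function `m`, every `s` lies below `A(x) ∘ m`; then so does `m`, which is impossible as `x ⊆ m`.
So both sides of the equivalence say that `a ∘ -` preserves the joins of atoms.
-/

namespace PFAlg

variable {X : Type*} {F : Set (Set (X × X))}

theorem mem_comp_adom_iff {g b : Set (X × X)} {p : X × X} :
    p ∈ comp (adom g) b ↔ (∀ y, (p.1, y) ∉ g) ∧ p ∈ b := by
  constructor
  · rintro ⟨y, ⟨hy, hg⟩, hb⟩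
    obtain rfl : p.1 = y := hy
    exact ⟨hg, hb⟩
  · rintro ⟨hg, hb⟩
    exact ⟨p.1, ⟨rfl, hg⟩, hb⟩

theorem mem_comp_adom_of_notMem {g b : Set (X × X)} (hb : IsPF b) (hgb : g ⊆ b) {p : X × X}
    (hpb : p ∈ b) (hpg : p ∉ g) : p ∈ comp (adom g) b :=
  mem_comp_adom_iff.2 ⟨fun y hy => hpg (by rwa [hb (hgb hy) hpb] at hy), hpb⟩

theorem eq_empty_of_subset_comp_adom {x g b : Set (X × X)} (hxg : x ⊆ g)
    (hx : x ⊆ comp (adom g) b) : x = ∅ :=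
  Set.eq_empty_of_forall_notMem fun p hp => (mem_comp_adom_iff.1 (hx hp)).1 p.2 (hxg hp)

theorem comp_subset_comp_right {a s t : Set (X × X)} (hst : s ⊆ t) : comp a s ⊆ comp a t :=
  fun _ ⟨y, hay, hys⟩ => ⟨y, hay, hst hys⟩

theorem isLUBIn_atoms_subset (hF : IsPFAlgebra F) (hatomic : Atomic F) {b : Set (X × X)}
    (hb : b ∈ F) : IsLUBIn F {x | IsAtomOf F x ∧ x ⊆ b} b := by
  refine ⟨hb, fun _ hx => hx.2, fun c hc hub p hpb => ?_⟩
  by_contra hpc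
  have hbc : b ∩ c ∈ F := hF.inter_mem b hb c hc
  have hpk : p ∈ comp (adom (b ∩ c)) b :=
    mem_comp_adom_of_notMem (hF.pf b hb) Set.inter_subset_left hpb fun h => hpc h.2
  obtain ⟨x, hx, hxk⟩ := hatomic _ (hF.comp_mem _ (hF.adom_mem _ hbc) b hb)
    (Set.nonempty_iff_ne_empty.1 ⟨p, hpk⟩)
  have hxb : x ⊆ b := fun _ hq => (mem_comp_adom_iff.1 (hxk hq)).2
  exact hx.2.1 (eq_empty_of_subset_comp_adom (Set.subset_inter hxb (hub x ⟨hx, hxb⟩)) hxk)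

theorem IsAtomOf.subset_of_inter_nonempty (hF : IsPFAlgebra F) {x s : Set (X × X)}
    (hx : IsAtomOf F x) (hs : s ∈ F) (hxs : (x ∩ s).Nonempty) : x ⊆ s :=
  hx.2.2 _ (hF.inter_mem x hx.1 s hs) hxs.ne_empty Set.inter_subset_left ▸
    Set.inter_subset_right

theorem IsAtomOf.exists_subset_of_subset_lub (hF : IsPFAlgebra F) {x m : Set (X × X)}
    {S : Set (Set (X × X))} (hx : IsAtomOf F x) (hS : S ⊆ F) (hm : IsLUBIn F S m)
    (hxm : x ⊆ m) : ∃ s ∈ S, x ⊆ s := by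
  by_contra! hno
  have hsk : ∀ s ∈ S, s ⊆ comp (adom x) m := fun s hs p hps =>
    mem_comp_adom_of_notMem (hF.pf m hm.1) hxm (hm.2.1 s hs hps) fun hpx =>
      hno s hs (hx.subset_of_inter_nonempty hF (hS hs) ⟨p, hpx, hps⟩)
  have hmk : m ⊆ comp (adom x) m :=
    hm.2.2 _ (hF.comp_mem _ (hF.adom_mem x hx.1) m hm.1) hsk
  exact hx.2.1 (eq_empty_of_subset_comp_adom subset_rfl (hxm.trans hmk))

end PFAlg

open PFAlg in
/-- in an atomic algebra of partial functions, composition is completely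
left-distributive over joins iff for all `a, b, c ∈ F`: if `c ⊇ a∘x` for every atom
`x ⊆ b`, then `c ⊇ a∘b`. -/
theorem stmt17 {X : Type*} (F : Set (Set (X × X))) (hF : IsPFAlgebra F)
    (hatomic : Atomic F) :
    CompLeftDistribJoins F ↔
      ∀ a ∈ F, ∀ b ∈ F, ∀ c ∈ F,
        (∀ x, IsAtomOf F x → x ⊆ b → comp a x ⊆ c) → comp a b ⊆ c := by
  constructor
  · intro hdist a ha b hb c hc hatoms
    refine (hdist a ha _ (fun x hx => hx.1.1) b (isLUBIn_atoms_subset hF hatomic hb)).2.2 c hc ?_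
    rintro _ ⟨x, ⟨hx, hxb⟩, rfl⟩
    exact hatoms x hx hxb
  · intro H a ha S hS m hm
    refine ⟨hF.comp_mem a ha m hm.1, ?_, fun c hc hub => H a ha m hm.1 c hc fun x hx hxm => ?_⟩
    · rintro _ ⟨s, hs, rfl⟩
      exact comp_subset_comp_right (hm.2.1 s hs)
    · obtain ⟨s, hs, hxs⟩ := hx.exists_subset_of_subset_lub hF hS hm hxm
      exact (comp_subset_comp_right hxs).trans (hub _ ⟨s, hs, rfl⟩)
end
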